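/- Let S be a stable cut in a graph G (d_S(v) ≥ (d(v)−1)/2 strictly, i.e., d_S(v) > (d(v)−1)/2 for all v) with φ(S) < (m−Δ)/2. Then S has a unique critical vertex, i.e., there is exactly one vertex u with C_{S−u,G−u} = φ(S), and this vertex satisfies d_S(u) > Σ_{v≠u} x_S(v) + Δ − d(u)/2. -/

import Mathlib

open Finset

noncomputable section

variable {V : Type*} [Fintype V] [DecidableEq V]

/-- Total weight of edges crossing the cut `S` (each unordered crossing edge counted once). -/
def cutW (w : V → V → ℝ) (S : Finset V) : ℝ :=
  ∑ u ∈ S, ∑ v ∈ Sᶜ, w u v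

/-- Weighted degree of a vertex. -/
def degW (w : V → V → ℝ) (v : V) : ℝ := ∑ u, w v u

/-- Total weight of crossing edges incident to `v`. -/
def crossDegW (w : V → V → ℝ) (S : Finset V) (v : V) : ℝ :=
  ∑ u, if (v ∈ S ∧ u ∉ S) ∨ (u ∈ S ∧ v ∉ S) then w v u else 0

/-- Total weight of crossing edges incident to at least one vertex of `F`. -/
def crossDegSetW (w : V → V → ℝ) (S F : Finset V) : ℝ :=
  ∑ u ∈ S, ∑ v ∈ Sᶜ, if u ∈ F ∨ v ∈ F then w u v else 0

/-- Weight of edges crossing `S` that avoid `F`: the cut `S − F` in `G − F`. -/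
def cutMinusW (w : V → V → ℝ) (S F : Finset V) : ℝ :=
  ∑ u ∈ S, ∑ v ∈ Sᶜ, if u ∉ F ∧ v ∉ F then w u v else 0

/-- The cut obtained from `S` by moving `v` to the opposite side. -/
def flipCut (S : Finset V) (v : V) : Finset V :=
  if v ∈ S then S.erase v else insert v S

/-- The k-fault-tolerant value of the cut `S` against an adaptive adversary. -/
noncomputable def ftValW (w : V → V → ℝ) (S : Finset V) (k : ℕ) : ℝ :=
  sInf ((fun F => cutMinusW w S F) '' {F : Finset V | F.card = k})

/-- The single-fault FT value of the cut `S`. -/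
noncomputable def ft1W (w : V → V → ℝ) (S : Finset V) : ℝ :=
  sInf (Set.range fun v => cutMinusW w S {v})

/-- Total edge weight of the graph. -/
def totalW (w : V → V → ℝ) : ℝ := (∑ u, ∑ v, w u v) / 2

/-- Maximum weighted degree. -/
noncomputable def maxDegW (w : V → V → ℝ) : ℝ := sSup (Set.range (degW w))


/-!
Write `x(v) = d_S(v) - d(v)/2` for the excess. Degrees are integers, so the strict stability
inequality `x(v) > -1/2` improves to `x(v) ≥ 0`, and `∑ v, x(v) = 2 C_S - m`. If `u` is critical
then `C_S - d_S(u) = φ(S) < (m - Δ)/2`, i.e. `d_S(u) > C_S - m/2 + Δ/2`, hence `x(u) > C_S - m/2`. Two distinct critical vertices would have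
excesses summing to more than `2 C_S - m ≥ x(u) + x(u')`. The bound on `d_S(u)` is the same inequality
rewritten with `x(u) = 2 C_S - m - ∑_{v ≠ u} x(v)`.
-/

section CutExcess

variable (w : V → V → ℝ) (S : Finset V)

def excessW (v : V) : ℝ := crossDegW w S v - degW w v / 2

variable {S} in
lemma crossDegW_of_mem {x : V} (hx : x ∈ S) : crossDegW w S x = ∑ u ∈ Sᶜ, w x u := by
  unfold crossDegW
  rw [← sum_filter]
  congr 1
  ext u
  simp [hx]

variable {S} in
lemma crossDegW_of_notMem {x : V} (hx : x ∉ S) : crossDegW w S x = ∑ u ∈ S, w x u := by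
  unfold crossDegW
  rw [← sum_filter]
  congr 1
  ext u
  simp [hx]

lemma sum_crossDegW (hsym : ∀ u v, w u v = w v u) : ∑ v, crossDegW w S v = 2 * cutW w S := by
  rw [← sum_add_sum_compl S, sum_congr rfl fun v hv => crossDegW_of_mem w hv,
    sum_congr rfl fun v hv => crossDegW_of_notMem w (mem_compl.mp hv), sum_comm (s := Sᶜ)]
  simp only [hsym _ (_ : V)]
  unfold cutW
  ring

lemma cutW_sub_cutMinusW (F : Finset V) : cutW w S - cutMinusW w S F = crossDegSetW w S F := by
  unfold cutW cutMinusW crossDegSetW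
  rw [← sum_sub_distrib]
  refine sum_congr rfl fun u _ => ?_
  rw [← sum_sub_distrib]
  refine sum_congr rfl fun v _ => ?_
  by_cases hu : u ∈ F <;> by_cases hv : v ∈ F <;> simp [hu, hv]

lemma crossDegSetW_singleton (hsym : ∀ u v, w u v = w v u) (x : V) :
    crossDegSetW w S {x} = crossDegW w S x := by
  unfold crossDegSetW
  by_cases hx : x ∈ S
  · rw [crossDegW_of_mem w hx]
    have hvx : ∀ v ∈ Sᶜ, v ≠ x := fun v hv h => mem_compl.mp hv (h ▸ hx)
    calc _ = ∑ u ∈ S, if u = x then ∑ v ∈ Sᶜ, w u v else 0 := by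
          refine sum_congr rfl fun u _ => ?_
          split_ifs with hux
          · exact sum_congr rfl fun v _ => by simp [hux]
          · exact sum_eq_zero fun v hv => by simp [hux, hvx v hv]
      _ = _ := by rw [sum_ite_eq' S x, if_pos hx]
  · rw [crossDegW_of_notMem w hx]
    refine sum_congr rfl fun u hu => ?_
    have hux : u ≠ x := fun h => hx (h ▸ hu)
    simp [hux, hx, hsym x u]

lemma cutMinusW_singleton (hsym : ∀ u v, w u v = w v u) (x : V) :
    cutMinusW w S {x} = cutW w S - crossDegW w S x := by
  rw [← crossDegSetW_singleton w S hsym, ← cutW_sub_cutMinusW, sub_sub_cancel]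

lemma sum_excessW (hsym : ∀ u v, w u v = w v u) :
    ∑ v, excessW w S v = 2 * cutW w S - totalW w := by
  unfold excessW totalW degW
  rw [sum_sub_distrib, sum_crossDegW w S hsym, sum_div]

end CutExcess

lemma sum_eq_card_filter_of_zero_or_one {ι : Type*} (s : Finset ι) {f : ι → ℝ}
    (hf : ∀ i ∈ s, f i = 0 ∨ f i = 1) : ∑ i ∈ s, f i = #{i ∈ s | f i = 1} := by
  rw [natCast_card_filter]
  refine sum_congr rfl fun i hi => ?_
  rcases hf i hi with h | h <;> simp [h]

lemma half_le_of_half_pred_lt {a b : ℕ} (h : ((a : ℝ) - 1) / 2 < b) : (a : ℝ) / 2 ≤ b := by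
  have : a < 2 * b + 1 := by exact_mod_cast (by linarith : (a : ℝ) < 2 * b + 1)
  have : (a : ℝ) ≤ 2 * b := by exact_mod_cast Nat.lt_succ_iff.mp this
  linarith

lemma excessW_nonneg {w : V → V → ℝ} (h01 : ∀ u v, w u v = 0 ∨ w u v = 1) {S : Finset V} {v : V}
    (hv : (degW w v - 1) / 2 < crossDegW w S v) : 0 ≤ excessW w S v := by
  unfold excessW degW crossDegW at *
  rw [sum_eq_card_filter_of_zero_or_one _ fun u _ => h01 v u,
    sum_eq_card_filter_of_zero_or_one _ fun u _ => by split_ifs; exacts [h01 v u, .inl rfl]] at *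
  linarith [half_le_of_half_pred_lt hv]

omit [DecidableEq V] in
lemma degW_le_maxDegW (w : V → V → ℝ) (v : V) : degW w v ≤ maxDegW w :=
  le_csSup (Set.finite_range _).bddAbove ⟨v, rfl⟩

lemma exists_cutMinusW_singleton_eq_ft1W [Nonempty V] (w : V → V → ℝ) (S : Finset V) :
    ∃ u, cutMinusW w S {u} = ft1W w S :=
  (Set.range_nonempty _).csInf_mem (Set.finite_range _)

theorem stmt_6_general [Nonempty V] (w : V → V → ℝ) (hsym : ∀ u v, w u v = w v u)
    (h01 : ∀ u v, w u v = 0 ∨ w u v = 1)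
    (S : Finset V)
    (hstable : ∀ v, (degW w v - 1) / 2 < crossDegW w S v)
    (hft : ft1W w S < (totalW w - maxDegW w) / 2) :
    (∃! u : V, cutMinusW w S {u} = ft1W w S) ∧
      ∀ u : V, cutMinusW w S {u} = ft1W w S →
        (∑ v ∈ Finset.univ.erase u, (crossDegW w S v - degW w v / 2)) +
            maxDegW w - degW w u / 2 < crossDegW w S u := by
  have hsum := sum_excessW w S hsym
  have hcrit : ∀ u, cutMinusW w S {u} = ft1W w S →
      cutW w S - totalW w / 2 + (maxDegW w - degW w u) / 2 < excessW w S u := fun u hu => by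
    rw [← hu, cutMinusW_singleton w S hsym] at hft
    unfold excessW
    linarith
  obtain ⟨u₀, hu₀⟩ := exists_cutMinusW_singleton_eq_ft1W w S
  refine ⟨⟨u₀, hu₀, fun u hu => ?_⟩, fun u hu => ?_⟩
  · by_contra hne
    have := add_le_sum (fun v _ => excessW_nonneg h01 (hstable v)) (mem_univ u) (mem_univ u₀) hne
    linarith [hcrit u hu, hcrit u₀ hu₀, degW_le_maxDegW w u, degW_le_maxDegW w u₀]
  · change ∑ v ∈ univ.erase u, excessW w S v + _ - _ < _
    have hu_excess : excessW w S u = crossDegW w S u - degW w u / 2 := rfl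
    linarith [add_sum_erase univ (excessW w S) (mem_univ u), hcrit u hu]

theorem stmt_6 [Nonempty V] (w : V → V → ℝ) (hsym : ∀ u v, w u v = w v u)
    (h01 : ∀ u v, w u v = 0 ∨ w u v = 1) (hdiag : ∀ v, w v v = 0)
    (S : Finset V)
    (hstable : ∀ v, (degW w v - 1) / 2 < crossDegW w S v)
    (hft : ft1W w S < (totalW w - maxDegW w) / 2) :
    (∃! u : V, cutMinusW w S {u} = ft1W w S) ∧
      ∀ u : V, cutMinusW w S {u} = ft1W w S →
        (∑ v ∈ Finset.univ.erase u, (crossDegW w S v - degW w v / 2)) +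
            maxDegW w - degW w u / 2 < crossDegW w S u :=
  stmt_6_general w hsym h01 S hstable hft
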